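/- With w as in the explicit formula w(r) = η₀(r) + 2r²/(1+r²) - (1/2)η₀(r)² + ((1-r²)/(1+r²))∫₁^{1+r²} (log t)/(1-t) dt (η₀(r) = -log(1+r²)), one has lim_{r→∞} 2πr w'(r) = -4π; equivalently ∫_{ℝ²} Δw dx = -4π. -/

import Mathlib

/-!
Write `w r = wSq (r ^ 2)` and `flux u = u * wSq' u`, so that `r * w' r = 2 * flux (r ^ 2)`.
For a radial function `g (‖x‖ ^ 2)` on `ℝ²` one has `Δ = 4 (u g')'` at `u = ‖x‖ ^ 2`, hence
`Δ w (x) = 4 * flux' (‖x‖ ^ 2)`, and in polar coordinates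
`∫_{ℝ²} Δ w = 2π ∫₀^∞ 2 (flux (r ^ 2))' dr = 4π (flux ∞ - flux 0) = -4π`.
Both the limit `flux u → -1` and the bound `|(flux (r ^ 2))'| ≤ 32 / (1 + r ^ 2)`, which makes the
last integral converge, come from `log v ≤ 2 √v` and `|∫₁^v log t / (1 - t) dt| ≤ 4 √v`.
-/

open Real MeasureTheory Filter intervalIntegral Set
open scoped Topology RealInnerProductSpace

/-- The Laplacian of a function on `ℝ²`. -/
noncomputable def laplacian (f : EuclideanSpace ℝ (Fin 2) → ℝ)
    (x : EuclideanSpace ℝ (Fin 2)) : ℝ :=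
  ∑ i : Fin 2,
    fderiv ℝ (fun y => fderiv ℝ f y (EuclideanSpace.single i 1)) x (EuclideanSpace.single i 1)

section InnerProductSpace

variable {E : Type*} [NormedAddCommGroup E] [InnerProductSpace ℝ E]

lemma HasDerivAt.hasFDerivAt_comp_norm_sq {g : ℝ → ℝ} {g' : ℝ} {y : E}
    (h : HasDerivAt g g' (‖y‖ ^ 2)) :
    HasFDerivAt (fun y => g (‖y‖ ^ 2)) (g' • 2 • innerSL ℝ y) y :=
  h.comp_hasFDerivAt y (hasStrictFDerivAt_norm_sq y).hasFDerivAt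

lemma fderiv_fderiv_comp_norm_sq_apply {g g' : ℝ → ℝ} {g'' : ℝ} {x : E}
    (hg : ∀ᶠ u in 𝓝 (‖x‖ ^ 2), HasDerivAt g (g' u) u) (hg' : HasDerivAt g' g'' (‖x‖ ^ 2))
    (v : E) :
    fderiv ℝ (fun y => fderiv ℝ (fun y => g (‖y‖ ^ 2)) y v) x v
      = 4 * g'' * ⟪x, v⟫ ^ 2 + 2 * g' (‖x‖ ^ 2) * ‖v‖ ^ 2 := by
  have hfirst : (fun y => fderiv ℝ (fun y => g (‖y‖ ^ 2)) y v)
      =ᶠ[𝓝 x] fun y => 2 * g' (‖y‖ ^ 2) * ⟪v, y⟫ := by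
    filter_upwards [((continuous_norm.pow 2).tendsto x).eventually hg] with y hy
    rw [hy.hasFDerivAt_comp_norm_sq.fderiv]
    simp only [Pi.pow_apply, smul_apply, coe_innerSL_apply, real_inner_comm,
      nsmul_eq_mul, Nat.cast_ofNat, smul_eq_mul]
    ring
  have hsecond := ((hg'.hasFDerivAt_comp_norm_sq.const_mul 2).mul (innerSL ℝ v).hasFDerivAt)
  rw [hfirst.fderiv_eq, HasFDerivAt.fderiv (f := fun y => 2 * g' (‖y‖ ^ 2) * ⟪v, y⟫) hsecond]
  simp only [coe_innerSL_apply, real_inner_comm, add_apply,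
    smul_apply, inner_self_eq_norm_sq_to_K, RCLike.ofReal_real_eq_id, id,
    smul_eq_mul, nsmul_eq_mul, Nat.cast_ofNat]
  ring

end InnerProductSpace

lemma laplacian_comp_norm_sq {g g' : ℝ → ℝ} {g'' : ℝ} {x : EuclideanSpace ℝ (Fin 2)}
    (hg : ∀ᶠ u in 𝓝 (‖x‖ ^ 2), HasDerivAt g (g' u) u) (hg' : HasDerivAt g' g'' (‖x‖ ^ 2)) :
    laplacian (fun y => g (‖y‖ ^ 2)) x = 4 * ‖x‖ ^ 2 * g'' + 4 * g' (‖x‖ ^ 2) := by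
  rw [laplacian, Fin.sum_univ_two, fderiv_fderiv_comp_norm_sq_apply hg hg',
    fderiv_fderiv_comp_norm_sq_apply hg hg', EuclideanSpace.norm_sq_eq]
  simp only [Fin.isValue, EuclideanSpace.inner_single_right, one_mul, norm_eq_abs, sq_abs,
    Fin.sum_univ_two, PiLp.norm_single, norm_one, one_pow, mul_one, conj_trivial]
  ring

lemma integral_fun_norm_euclideanSpace_two (f : ℝ → ℝ) :
    ∫ x : EuclideanSpace ℝ (Fin 2), f ‖x‖ = 2 * π * ∫ r in Ioi 0, r * f r := by
  have hball : volume.real (Metric.ball (0 : EuclideanSpace ℝ (Fin 2)) 1) = π := by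
    rw [measureReal_def, EuclideanSpace.volume_ball]
    norm_num [Real.Gamma_two, ENNReal.toReal_ofReal pi_nonneg, sq_sqrt pi_nonneg]
  rw [integral_fun_norm_addHaar volume f, finrank_euclideanSpace_fin, hball]
  simp only [Nat.add_one_sub_one, pow_one, smul_eq_mul, nsmul_eq_mul, Nat.cast_ofNat]
  ring

lemma log_le_two_mul_sqrt_sub_one {t : ℝ} (ht : 0 < t) : log t ≤ 2 * (√t - 1) := by
  have := log_le_sub_one_of_pos (sqrt_pos.mpr ht)
  rw [log_sqrt ht.le] at this
  linarith

lemma abs_log_div_one_sub_le {t : ℝ} (ht : 1 ≤ t) : |log t / (1 - t)| ≤ 2 / √t := by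
  rcases ht.eq_or_lt with rfl | ht
  · simp
  have hσ : 1 < √t := by rwa [lt_sqrt zero_le_one, one_pow]
  have hsq : √t ^ 2 = t := sq_sqrt (by linarith)
  rw [abs_div, abs_of_nonneg (log_nonneg ht.le), abs_of_neg (by linarith), neg_sub,
    div_le_div_iff₀ (by linarith) (by linarith)]
  nlinarith [log_le_two_mul_sqrt_sub_one (t := t) (by linarith)]

lemma abs_log_div_one_sub_le_two {t : ℝ} (ht : 1 ≤ t) : |log t / (1 - t)| ≤ 2 :=
  (abs_log_div_one_sub_le ht).trans <| div_le_self zero_le_two (one_le_sqrt.mpr ht)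

lemma intervalIntegrable_log_div_one_sub {a b : ℝ} (ha : 1 ≤ a) (hb : 1 ≤ b) :
    IntervalIntegrable (fun t => log t / (1 - t)) volume a b := by
  refine (intervalIntegrable_iff.mpr <| Measure.integrableOn_of_bounded (M := 2)
    measure_Ioc_lt_top.ne (by fun_prop : Measurable _).aestronglyMeasurable ?_)
  filter_upwards [ae_restrict_mem measurableSet_uIoc] with t ht
  exact abs_log_div_one_sub_le_two (le_min ha hb |>.trans (le_of_lt ht.1))

/-- Spence's function: `spence v = Li₂ (1 - v)`. -/
noncomputable def spence (v : ℝ) : ℝ := ∫ t in (1 : ℝ)..v, log t / (1 - t)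

lemma hasDerivAt_spence {v : ℝ} (hv : 1 < v) : HasDerivAt spence (log v / (1 - v)) v :=
  integral_hasDerivAt_right (intervalIntegrable_log_div_one_sub le_rfl hv.le)
    (by fun_prop : Measurable _).stronglyMeasurable.stronglyMeasurableAtFilter
    (by fun_prop (disch := simp; linarith))

lemma lipschitzOnWith_spence : LipschitzOnWith 2 spence (Ici 1) := by
  refine LipschitzOnWith.of_dist_le_mul fun a ha b hb => ?_
  rw [dist_eq_norm, spence, spence, integral_interval_sub_left
    (intervalIntegrable_log_div_one_sub le_rfl ha) (intervalIntegrable_log_div_one_sub le_rfl hb),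
    NNReal.coe_two, dist_eq_norm, norm_eq_abs (a - b)]
  exact norm_integral_le_of_norm_le_const fun t ht =>
    abs_log_div_one_sub_le_two (le_min hb ha |>.trans ht.1.le)

lemma abs_spence_le {s : ℝ} (hs : 1 ≤ s) : |spence s| ≤ 4 * √s := by
  have hderiv : ∀ t ∈ Ioo 1 s, HasDerivWithinAt (fun t => 4 * √t) (2 / √t) (Ioi t) t := by
    intro t ht
    refine (((hasDerivAt_sqrt (x := t) (by linarith [ht.1])).const_mul 4).congr_deriv ?_)
      |>.hasDerivWithinAt
    field_simp
    ring
  calc ‖spence s‖ ≤ ∫ t in (1 : ℝ)..s, ‖log t / (1 - t)‖ :=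
        intervalIntegral.norm_integral_le_integral_norm hs
    _ ≤ 4 * √s - 4 * √1 :=
      integral_le_sub_of_hasDeriv_right_of_le hs (by fun_prop) hderiv
        ((intervalIntegrable_iff_integrableOn_Icc_of_le hs).mp
          (intervalIntegrable_log_div_one_sub le_rfl hs).norm)
        fun t ht => abs_log_div_one_sub_le ht.1.le
    _ ≤ 4 * √s := by simp

noncomputable def wSq (u : ℝ) : ℝ :=
  -log (1 + u) + 2 * u / (1 + u) - (1 / 2) * (log (1 + u)) ^ 2
    + (1 - u) / (1 + u) * spence (1 + u)

noncomputable def flux (u : ℝ) : ℝ :=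
  -u / (1 + u) + 2 * u / (1 + u) ^ 2 - log (1 + u) / (1 + u)
    - 2 * u * spence (1 + u) / (1 + u) ^ 2

noncomputable def fluxDeriv (u : ℝ) : ℝ :=
  (3 * log (1 + u) - 2) / (1 + u) ^ 2 + 2 * (1 - u) * (1 - spence (1 + u)) / (1 + u) ^ 3

lemma hasDerivAt_log_one_add {u : ℝ} (hu : -1 < u) :
    HasDerivAt (fun u => log (1 + u)) (1 / (1 + u)) u := by
  simpa using ((hasDerivAt_id u).const_add 1).log (by simp; linarith)

lemma hasDerivAt_spence_one_add {u : ℝ} (hu : 0 < u) :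
    HasDerivAt (fun u => spence (1 + u)) (-log (1 + u) / u) u := by
  have := (hasDerivAt_spence (v := 1 + u) (by linarith)).comp u ((hasDerivAt_id' u).const_add 1)
  refine this.congr_deriv ?_
  field_simp [hu.ne']
  ring

lemma hasDerivAt_wSq {u : ℝ} (hu : 0 < u) : HasDerivAt wSq (flux u / u) u := by
  have hs : 1 + u ≠ 0 := by positivity
  have hL := hasDerivAt_log_one_add (by linarith)
  have hF := hasDerivAt_spence_one_add hu
  have hv := (hasDerivAt_id u).const_add 1
  have := ((hL.neg.add (((hasDerivAt_id u).const_mul 2).div hv hs)).sub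
    ((hL.pow 2).const_mul (1 / 2))).add (((hasDerivAt_id u).const_sub 1).div hv hs |>.mul hF)
  refine HasDerivAt.congr_deriv (f := wSq) this ?_
  simp only [flux, id, Pi.div_apply]
  field_simp
  ring

lemma hasDerivAt_flux {u : ℝ} (hu : 0 < u) : HasDerivAt flux (fluxDeriv u) u := by
  have hs : 1 + u ≠ 0 := by positivity
  have hL := hasDerivAt_log_one_add (by linarith)
  have hF := hasDerivAt_spence_one_add hu
  have hv := (hasDerivAt_id u).const_add 1
  have := (((((hasDerivAt_id u).neg.div hv hs).add (((hasDerivAt_id u).const_mul 2).div (hv.pow 2)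
    (pow_ne_zero 2 hs))).sub (hL.div hv hs)).sub
    ((((hasDerivAt_id u).const_mul 2).mul hF).div (hv.pow 2) (pow_ne_zero 2 hs)))
  refine HasDerivAt.congr_deriv (f := flux) this ?_
  simp only [fluxDeriv, id, Pi.pow_apply, Pi.mul_apply, Pi.neg_apply]
  field_simp
  ring

lemma continuous_spence_one_add_sq : Continuous fun r : ℝ => spence (1 + r ^ 2) :=
  lipschitzOnWith_spence.continuousOn.comp_continuous (by fun_prop)
    fun r => le_add_of_nonneg_right (sq_nonneg r)

lemma continuous_flux_sq : Continuous fun r : ℝ => flux (r ^ 2) := by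
  have := continuous_spence_one_add_sq
  unfold flux
  fun_prop (disch := intros; positivity)

lemma continuous_fluxDeriv_sq : Continuous fun r : ℝ => fluxDeriv (r ^ 2) := by
  have := continuous_spence_one_add_sq
  unfold fluxDeriv
  fun_prop (disch := intros; positivity)

lemma abs_fluxDeriv_le {u : ℝ} (hu : 0 ≤ u) :
    |fluxDeriv u| ≤ 16 * √(1 + u) / (1 + u) ^ 2 := by
  set s := 1 + u with hs
  have hs1 : 1 ≤ s := by linarith
  have hσ : 1 ≤ √s := one_le_sqrt.mpr hs1
  have hL := log_le_two_mul_sqrt_sub_one (t := s) (by linarith)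
  have hL0 := log_nonneg hs1
  have hF := abs_le.mp (abs_spence_le hs1)
  calc |fluxDeriv u|
      ≤ |3 * log s - 2| / s ^ 2 + 2 * |1 - u| * |1 - spence s| / s ^ 3 := by
        refine (abs_add_le _ _).trans_eq ?_
        rw [abs_div, abs_div, abs_mul, abs_mul, abs_two, abs_of_pos (by positivity : 0 < s ^ 2),
          abs_of_pos (by positivity : 0 < s ^ 3)]
    _ ≤ 6 * √s / s ^ 2 + 2 * s * (5 * √s) / s ^ 3 := by
        gcongr
        · exact abs_le.mpr ⟨by linarith, by linarith⟩
        · exact abs_le.mpr ⟨by linarith, by linarith⟩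
        · exact abs_le.mpr ⟨by linarith, by linarith⟩
    _ = 16 * √s / s ^ 2 := by
        field_simp
        ring

lemma abs_flux_add_one_le {u : ℝ} (hu : 0 ≤ u) : |flux u + 1| ≤ 13 / √(1 + u) := by
  set s := 1 + u with hs
  have hs1 : 1 ≤ s := by linarith
  have hσ : 1 ≤ √s := one_le_sqrt.mpr hs1
  have hσs : √s * √s = s := mul_self_sqrt (by linarith)
  have hL := log_le_two_mul_sqrt_sub_one (t := s) (by linarith)
  have hL0 := log_nonneg hs1
  have hF := abs_le.mp (abs_spence_le hs1)
  have hrw : flux u + 1 = (s + 2 * u - log s * s - 2 * u * spence s) / s ^ 2 := by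
    simp only [flux, ← hs]
    field_simp
    ring
  have hnum : |s + 2 * u - log s * s - 2 * u * spence s| ≤ 13 * (√s * s) := by
    refine abs_le.mpr ⟨?_, ?_⟩
    · nlinarith [mul_le_mul_of_nonneg_left hF.2 hu,
        mul_le_mul_of_nonneg_right hL (by linarith : 0 ≤ s)]
    · nlinarith [mul_le_mul_of_nonneg_left hF.1 hu, mul_nonneg hL0 (by linarith : 0 ≤ s)]
  calc |flux u + 1| = |s + 2 * u - log s * s - 2 * u * spence s| / s ^ 2 := by
        rw [hrw, abs_div, abs_of_pos (pow_pos (by linarith : (0 : ℝ) < s) 2)]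
    _ ≤ 13 * (√s * s) / s ^ 2 := by gcongr
    _ = 13 / √s := by
        field_simp
        nlinarith

lemma tendsto_flux_atTop : Tendsto flux atTop (𝓝 (-1)) := by
  have hbound : Tendsto (fun u => 13 / √(1 + u)) atTop (𝓝 0) :=
    tendsto_const_nhds.div_atTop <|
      tendsto_sqrt_atTop.comp (tendsto_atTop_add_const_left _ 1 tendsto_id)
  refine tendsto_sub_nhds_zero_iff.mp (squeeze_zero_norm' ?_ hbound)
  filter_upwards [eventually_ge_atTop 0] with u hu
  simpa using abs_flux_add_one_le hu

lemma abs_two_mul_mul_fluxDeriv_sq_le (r : ℝ) :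
    |2 * r * fluxDeriv (r ^ 2)| ≤ 32 / (1 + r ^ 2) := by
  have hs : 0 < 1 + r ^ 2 := by positivity
  have hr : |r| ≤ √(1 + r ^ 2) := abs_le_sqrt (by linarith)
  calc |2 * r * fluxDeriv (r ^ 2)| = 2 * |r| * |fluxDeriv (r ^ 2)| := by
        rw [abs_mul, abs_mul, abs_two]
    _ ≤ 2 * √(1 + r ^ 2) * (16 * √(1 + r ^ 2) / (1 + r ^ 2) ^ 2) := by
        gcongr
        exact abs_fluxDeriv_le (sq_nonneg r)
    _ = 32 / (1 + r ^ 2) := by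
        field_simp
        rw [sq_sqrt hs.le]
        ring

lemma integrable_two_mul_mul_fluxDeriv_sq : Integrable fun r : ℝ => 2 * r * fluxDeriv (r ^ 2) :=
  (integrable_inv_one_add_sq.const_mul 32).mono' (by have := continuous_fluxDeriv_sq; fun_prop)
    (Eventually.of_forall fun r =>
      (abs_two_mul_mul_fluxDeriv_sq_le r).trans_eq (div_eq_mul_inv _ _))

lemma integral_Ioi_two_mul_mul_fluxDeriv_sq :
    ∫ r in Ioi 0, 2 * r * fluxDeriv (r ^ 2) = -1 := by
  have hderiv : ∀ r ∈ Ioi (0 : ℝ),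
      HasDerivAt (fun r => flux (r ^ 2)) (2 * r * fluxDeriv (r ^ 2)) r := fun r hr =>
    ((hasDerivAt_flux (pow_pos hr 2)).comp (h := fun r => r ^ 2) r
      (hasDerivAt_pow 2 r)).congr_deriv (by push_cast; ring)
  rw [integral_Ioi_of_hasDerivAt_of_tendsto continuous_flux_sq.continuousWithinAt hderiv
    integrable_two_mul_mul_fluxDeriv_sq.integrableOn
    (tendsto_flux_atTop.comp (tendsto_pow_atTop two_ne_zero))]
  simp [flux]

lemma hasDerivAt_wSq_sq {r : ℝ} (hr : r ≠ 0) :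
    HasDerivAt (fun r => wSq (r ^ 2)) (2 * flux (r ^ 2) / r) r :=
  ((hasDerivAt_wSq (by positivity)).comp (h := fun r => r ^ 2) r (hasDerivAt_pow 2 r)).congr_deriv
    (by field_simp; push_cast; ring)

lemma laplacian_wSq_norm_sq {x : EuclideanSpace ℝ (Fin 2)} (hx : x ≠ 0) :
    laplacian (fun y => wSq (‖y‖ ^ 2)) x = 4 * fluxDeriv (‖x‖ ^ 2) := by
  have hu : 0 < ‖x‖ ^ 2 := by positivity
  rw [laplacian_comp_norm_sq (g' := fun u => flux u / u)
    ((eventually_gt_nhds hu).mono fun u hu => hasDerivAt_wSq hu)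
    ((hasDerivAt_flux hu).div (hasDerivAt_id _) hu.ne')]
  field_simp
  ring

/-- For the explicit radial function `w`, `lim_{r→∞} 2πr w'(r) = -4π`; equivalently
`∫_{ℝ²} Δw dx = -4π`. -/
theorem stmt5 (w : ℝ → ℝ)
    (hw : ∀ r, w r = -Real.log (1 + r ^ 2) + 2 * r ^ 2 / (1 + r ^ 2)
        - (1 / 2) * (Real.log (1 + r ^ 2)) ^ 2
        + (1 - r ^ 2) / (1 + r ^ 2) * ∫ t in (1 : ℝ)..(1 + r ^ 2), Real.log t / (1 - t)) :
    Tendsto (fun r => 2 * π * r * deriv w r) atTop (nhds (-(4 * π))) ∧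
    (∫ x : EuclideanSpace ℝ (Fin 2), laplacian (fun y => w ‖y‖) x) = -(4 * π) := by
  obtain rfl : w = fun r => wSq (r ^ 2) := funext hw
  constructor
  · have hflux : ∀ᶠ r in atTop,
        4 * π * flux (r ^ 2) = 2 * π * r * deriv (fun r => wSq (r ^ 2)) r := by
      filter_upwards [eventually_gt_atTop 0] with r hr
      rw [(hasDerivAt_wSq_sq hr.ne').deriv]
      field_simp
      ring
    have := (tendsto_flux_atTop.comp (tendsto_pow_atTop two_ne_zero)).const_mul (4 * π)
    rw [mul_neg_one] at this
    exact this.congr' hflux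
  · calc ∫ x : EuclideanSpace ℝ (Fin 2), laplacian (fun y => wSq (‖y‖ ^ 2)) x
        = ∫ x : EuclideanSpace ℝ (Fin 2), 4 * fluxDeriv (‖x‖ ^ 2) :=
          integral_congr_ae <| (Measure.ae_ne volume 0).mono fun x hx => laplacian_wSq_norm_sq hx
      _ = 2 * π * ∫ r in Ioi 0, 2 * (2 * r * fluxDeriv (r ^ 2)) := by
          rw [integral_fun_norm_euclideanSpace_two fun r => 4 * fluxDeriv (r ^ 2)]
          congr 2 with r
          ring
      _ = -(4 * π) := by
          rw [MeasureTheory.integral_const_mul, integral_Ioi_two_mul_mul_fluxDeriv_sq]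
          ring
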